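/- arXiv:2403.03660 — 6 statements merged into one kernel-verified Lean document; each statement's English description precedes it below -/
import Mathlib

section
/- Let G be a group, A and B proper subgroups of G, and φ: A → B an isomorphism. Then the HNN extension G* = ⟨G, t | t⁻¹at = φ(a), a ∈ A⟩ admits a surjective homomorphism onto ℤ sending every element of G to 0 and t to 1, and consequently G* has infinite C-width. -/
/-!
The HNN extension maps onto `ℤ` by counting the exponent of the stable letter `t`. Any group
`Γ` with a surjection `ψ : Γ → ℤ` has infinite C-width: the fibre `S = ψ⁻¹(1)` is conjugation
invariant because `ℤ` is abelian, it generates `Γ` since `x = (x t^{1-ψ x}) t^{ψ x - 1}` with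
`ψ t = 1`, and a product of `n` elements of `S ∪ S⁻¹` has `|ψ| ≤ n`, so `t^{n+1}` is never such
a product.
-/

/-- A subset `S` of a group is conjugation invariant if it is closed under
conjugation by all elements of the group. -/
def ConjInvariant {G : Type*} [Group G] (S : Set G) : Prop :=
  ∀ g s : G, s ∈ S → g⁻¹ * s * g ∈ S

/-- A group has finite width with respect to `S` if there is `n` such that every
element is a product of at most `n` elements of `S ∪ S⁻¹`. -/
def HasFiniteWidth {G : Type*} [Group G] (S : Set G) : Prop :=
  ∃ n : ℕ, ∀ g : G, ∃ l : List G, (∀ x ∈ l, x ∈ S ∪ S⁻¹) ∧ l.prod = g ∧ l.length ≤ n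

/-- A group has finite `C`-width if it has finite width with respect to every
conjugation invariant generating set. -/
def FiniteCWidth (G : Type*) [Group G] : Prop :=
  ∀ S : Set G, Subgroup.closure S = ⊤ → ConjInvariant S → HasFiniteWidth S

section

variable {G H : Type*} [Group G]

theorem conjInvariant_preimage [CommGroup H] (ψ : G →* H) (T : Set H) :
    ConjInvariant (ψ ⁻¹' T) := by
  intro g s hs
  rwa [Set.mem_preimage, map_mul, map_mul, map_inv, mul_right_comm, inv_mul_cancel, one_mul]

theorem closure_preimage_singleton_eq_top [Group H] (ψ : G →* H) (t : G)
    (hrange : ∀ x, ψ x ∈ Subgroup.zpowers (ψ t)) :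
    Subgroup.closure (ψ ⁻¹' {ψ t}) = ⊤ := by
  refine (Subgroup.eq_top_iff' _).2 fun x => ?_
  obtain ⟨k, hk⟩ := Subgroup.mem_zpowers_iff.1 (hrange x)
  have hshift : x * t ^ (1 - k) ∈ ψ ⁻¹' {ψ t} := by
    simp [← hk, ← zpow_add]
  have ht : t ∈ Subgroup.closure (ψ ⁻¹' {ψ t}) := Subgroup.subset_closure rfl
  have hx : x = x * t ^ (1 - k) * t ^ (k - 1) := by
    rw [mul_assoc, ← zpow_add, sub_add_sub_cancel', sub_self, zpow_zero, mul_one]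
  rw [hx]
  exact mul_mem (Subgroup.subset_closure hshift) (zpow_mem ht _)

theorem abs_toAdd_map_list_prod_le (ψ : G →* Multiplicative ℤ) (l : List G)
    (hl : ∀ x ∈ l, |(ψ x).toAdd| ≤ 1) :
    |(ψ l.prod).toAdd| ≤ l.length := by
  induction l with
  | nil => simp
  | cons a l ih =>
    rw [List.prod_cons, map_mul, toAdd_mul, List.length_cons, Nat.cast_succ, add_comm _ 1]
    exact (abs_add_le _ _).trans <|
      add_le_add (hl a List.mem_cons_self) (ih fun x hx => hl x (List.mem_cons_of_mem a hx))

theorem abs_toAdd_le_one_of_mem_union_inv (ψ : G →* Multiplicative ℤ) {x : G}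
    (hx : x ∈ ψ ⁻¹' {Multiplicative.ofAdd 1} ∪ (ψ ⁻¹' {Multiplicative.ofAdd 1})⁻¹) :
    |(ψ x).toAdd| ≤ 1 := by
  rcases hx with hx | hx
  · simp_all
  · have hx : ψ x = (Multiplicative.ofAdd 1)⁻¹ := by
      rw [← inv_inv x, map_inv, hx.out]
    simp [hx]

theorem not_finiteCWidth_of_surjective (ψ : G →* Multiplicative ℤ)
    (hψ : Function.Surjective ψ) : ¬ FiniteCWidth G := by
  obtain ⟨t, ht⟩ := hψ (Multiplicative.ofAdd 1)
  have hgen : Subgroup.closure (ψ ⁻¹' {ψ t}) = ⊤ :=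
    closure_preimage_singleton_eq_top ψ t fun x =>
      ⟨(ψ x).toAdd, by simp [ht, ← ofAdd_zsmul]⟩
  intro hfin
  obtain ⟨n, hn⟩ := hfin _ hgen (conjInvariant_preimage ψ _)
  obtain ⟨l, hl, hprod, hlen⟩ := hn (t ^ ((n : ℤ) + 1))
  have hbound := abs_toAdd_map_list_prod_le ψ l fun x hx =>
    abs_toAdd_le_one_of_mem_union_inv ψ (ht ▸ hl x hx)
  rw [hprod, map_zpow, ht, ← ofAdd_zsmul, toAdd_ofAdd, smul_eq_mul, mul_one] at hbound
  have := (le_abs_self _).trans hbound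
  omega

end

theorem HNNExtension.exists_surjective_toInt {G : Type*} [Group G] (A B : Subgroup G)
    (φ : A ≃* B) :
    ∃ ψ : HNNExtension G A B φ →* Multiplicative ℤ,
      (∀ g : G, ψ (HNNExtension.of g) = 1) ∧
      ψ (HNNExtension.t) = Multiplicative.ofAdd (1 : ℤ) ∧
      Function.Surjective ψ := by
  let ψ := HNNExtension.lift (φ := φ) 1 (Multiplicative.ofAdd (1 : ℤ)) fun _ => by simp
  have ht : ψ HNNExtension.t = Multiplicative.ofAdd 1 := HNNExtension.lift_t ..
  refine ⟨ψ, fun g => HNNExtension.lift_of .., ht, fun y => ⟨HNNExtension.t ^ y.toAdd, ?_⟩⟩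
  rw [map_zpow, ht, ← ofAdd_zsmul, smul_eq_mul, mul_one, ofAdd_toAdd]

theorem hnnExtension_infinite_C_width_general (G : Type*) [Group G] (A B : Subgroup G)
    (φ : A ≃* B) :
    (∃ ψ : HNNExtension G A B φ →* Multiplicative ℤ,
      (∀ g : G, ψ (HNNExtension.of g) = 1) ∧
      ψ (HNNExtension.t) = Multiplicative.ofAdd (1 : ℤ) ∧
      Function.Surjective ψ) ∧
    ¬ FiniteCWidth (HNNExtension G A B φ) := by
  obtain ⟨ψ, hof, ht, hsurj⟩ := HNNExtension.exists_surjective_toInt A B φ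
  exact ⟨⟨ψ, hof, ht, hsurj⟩, not_finiteCWidth_of_surjective ψ hsurj⟩

/-- An HNN extension of `G` over an isomorphism of proper subgroups `A ≃* B` surjects
onto ℤ (sending `G` to `0` and `t` to `1`), and consequently has infinite `C`-width. -/
theorem hnnExtension_infinite_C_width (G : Type*) [Group G] (A B : Subgroup G)
    (hA : A ≠ ⊤) (hB : B ≠ ⊤) (φ : A ≃* B) :
    (∃ ψ : HNNExtension G A B φ →* Multiplicative ℤ,
      (∀ g : G, ψ (HNNExtension.of g) = 1) ∧
      ψ (HNNExtension.t) = Multiplicative.ofAdd (1 : ℤ) ∧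
      Function.Surjective ψ) ∧
    ¬ FiniteCWidth (HNNExtension G A B φ) :=
  hnnExtension_infinite_C_width_general G A B φ
end

section
/- Every torsion-free one-relator group on at least two generators has infinite C-width. -/
/-!
A one-relator group on at least two generators maps onto `ℤ`: if `a` and `b` are the exponent
sums of the relator in two of the generators, choose coprime `x, y` with `x * a + y * b = 0` and
send those generators to `x` and `y`, the others to `0`. Finite `C`-width passes to quotients,
while `ℤ` has infinite `C`-width: it is generated by the conjugation-invariant set `{1}`, and
`N + 1` is not a sum of `N` terms `±1`.
-/

open Function

theorem Multiplicative.ofAdd_one_zpow_toAdd (m : Multiplicative ℤ) : ofAdd 1 ^ m.toAdd = m := by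
  rw [← Int.ofAdd_mul, one_mul, ofAdd_toAdd]

section Width

variable {G H : Type*} [Group G] [Group H]

theorem ConjInvariant.preimage {S : Set H} (hS : ConjInvariant S) (f : G →* H) :
    ConjInvariant (f ⁻¹' S) := fun g s hs => by
  simpa only [Set.mem_preimage, map_mul, map_inv] using hS (f g) (f s) hs

theorem ConjInvariant.insert_one {S : Set G} (hS : ConjInvariant S) :
    ConjInvariant (insert 1 S) := by
  rintro g s (rfl | hs)
  · simp
  · exact Or.inr (hS g s hs)

theorem HasFiniteWidth.of_surjective {T : Set G} {S : Set H} (hT : HasFiniteWidth T)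
    {f : G →* H} (hf : Surjective f) (hTS : Set.MapsTo f T S) : HasFiniteWidth S := by
  obtain ⟨N, hN⟩ := hT
  refine ⟨N, fun h => ?_⟩
  obtain ⟨g, rfl⟩ := hf h
  obtain ⟨l, hlT, rfl, hlN⟩ := hN g
  refine ⟨l.map f, ?_, (map_list_prod f l).symm, (l.length_map f).trans_le hlN⟩
  simp only [List.mem_map]
  rintro _ ⟨x, hx, rfl⟩
  rcases hlT x hx with hx | hx
  · exact Or.inl (hTS hx)
  · exact Or.inr (by simpa only [Set.mem_inv, map_inv] using hTS hx)

theorem HasFiniteWidth.of_insert_one {S : Set G} (hS : HasFiniteWidth (insert 1 S)) :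
    HasFiniteWidth S := by
  classical
  obtain ⟨N, hN⟩ := hS
  refine ⟨N, fun g => ?_⟩
  obtain ⟨l, hl, rfl, hlN⟩ := hN g
  refine ⟨l.filter (· != 1), ?_, l.prod_filter_bne_one, (List.length_filter_le _ _).trans hlN⟩
  intro x hx
  obtain ⟨hxl, hx1⟩ := List.mem_filter.mp hx
  have hx1 : x ≠ 1 := by simpa using hx1
  rcases hl x hxl with (rfl | hx) | (hx | hx)
  · exact absurd rfl hx1
  · exact Or.inl hx
  · exact absurd (inv_eq_one.mp hx) hx1
  · exact Or.inr hx

theorem FiniteCWidth.of_surjective (hG : FiniteCWidth G) {f : G →* H} (hf : Surjective f) :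
    FiniteCWidth H := by
  intro S hSgen hSconj
  -- Adjoining `1` puts `f.ker` inside the pulled-back generating set.
  set T := f ⁻¹' insert 1 S
  have hTgen : Subgroup.closure T = ⊤ := by
    have hker : f.ker ≤ Subgroup.closure T := fun g hg =>
      Subgroup.subset_closure (Or.inl (f.mem_ker.mp hg))
    have hmap : (Subgroup.closure T).map f = ⊤ := by
      rw [MonoidHom.map_closure, Set.image_preimage_eq _ hf, eq_top_iff, ← hSgen]
      exact Subgroup.closure_mono (Set.subset_insert 1 S)
    rw [← sup_eq_left.mpr hker, ← Subgroup.comap_map_eq, hmap, Subgroup.comap_top]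
  exact ((hG T hTgen (hSconj.insert_one.preimage f)).of_surjective hf
    (Set.mapsTo_preimage f _)).of_insert_one

end Width

theorem not_finiteCWidth_multiplicative_int : ¬ FiniteCWidth (Multiplicative ℤ) := by
  intro h
  have hgen : Subgroup.closure {Multiplicative.ofAdd (1 : ℤ)} = ⊤ := by
    rw [eq_top_iff]
    intro x _
    exact Subgroup.mem_closure_singleton.mpr ⟨x.toAdd, Multiplicative.ofAdd_one_zpow_toAdd x⟩
  have hconj : ConjInvariant {Multiplicative.ofAdd (1 : ℤ)} := by
    rintro g s rfl
    simp [mul_comm]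
  obtain ⟨N, hN⟩ := h {Multiplicative.ofAdd (1 : ℤ)} hgen hconj
  obtain ⟨l, hl, hprod, hlN⟩ := hN (Multiplicative.ofAdd ((N : ℤ) + 1))
  have hle : l.prod ≤ Multiplicative.ofAdd (1 : ℤ) ^ l.length := by
    refine l.prod_le_pow_card _ fun x hx => ?_
    rcases hl x hx with rfl | hx
    · rfl
    · rw [Set.mem_inv, Set.mem_singleton_iff, inv_eq_iff_eq_inv] at hx
      subst hx
      exact Multiplicative.ofAdd_le.mpr (by norm_num)
  rw [hprod, ← ofAdd_nsmul, Multiplicative.ofAdd_le, nsmul_one] at hle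
  omega

theorem exists_isCoprime_mul_add_mul_eq_zero {R : Type*} [EuclideanDomain R] [GCDMonoid R]
    (a b : R) : ∃ x y : R, IsCoprime x y ∧ x * a + y * b = 0 := by
  by_cases h : gcd a b = 0
  · obtain ⟨rfl, rfl⟩ := (gcd_eq_zero_iff a b).mp h
    exact ⟨1, 0, isCoprime_one_left, by simp⟩
  · refine ⟨b / gcd a b, -(a / gcd a b),
      (isCoprime_div_gcd_div_gcd_of_gcd_ne_zero h).symm.neg_right, ?_⟩
    set g := gcd a b
    obtain ⟨a', ha⟩ : g ∣ a := gcd_dvd_left a b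
    obtain ⟨b', hb⟩ : g ∣ b := gcd_dvd_right a b
    rw [ha, hb, mul_div_cancel_left₀ _ h, mul_div_cancel_left₀ _ h]
    ring

theorem MonoidHom.surjective_of_apply_eq_ofAdd_one {G : Type*} [Group G]
    {f : G →* Multiplicative ℤ} {s : G} (hs : f s = .ofAdd 1) : Surjective f :=
  fun m => ⟨s ^ m.toAdd, by rw [map_zpow, hs, Multiplicative.ofAdd_one_zpow_toAdd]⟩

theorem PresentedGroup.exists_surjective_multiplicative_int {ι : Type*} {i j : ι} (hij : i ≠ j)
    (r : FreeGroup ι) :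
    ∃ φ : PresentedGroup ({r} : Set (FreeGroup ι)) →* Multiplicative ℤ, Surjective φ := by
  classical
  let e : FreeGroup ι →* Multiplicative (ℤ × ℤ) :=
    FreeGroup.lift fun k => .ofAdd (if k = i then 1 else 0, if k = j then 1 else 0)
  obtain ⟨x, y, ⟨u, v, huv⟩, hr⟩ :=
    exists_isCoprime_mul_add_mul_eq_zero (e r).toAdd.1 (e r).toAdd.2
  let L : ℤ × ℤ →+ ℤ := x • AddMonoidHom.fst ℤ ℤ + y • AddMonoidHom.snd ℤ ℤ
  let ψ : FreeGroup ι →* Multiplicative ℤ := L.toMultiplicative.comp e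
  have hψr : ∀ s ∈ ({r} : Set (FreeGroup ι)),
      FreeGroup.lift (fun k => ψ (FreeGroup.of k)) s = 1 := by
    rintro s rfl
    rw [← FreeGroup.lift_unique ψ fun _ => rfl]
    show Multiplicative.ofAdd (L (e s).toAdd) = 1
    rw [← ofAdd_zero, ← hr]
    rfl
  let φ := PresentedGroup.toGroup hψr
  have hφi : φ (of i) = .ofAdd x := by simp [φ, ψ, L, e, hij]
  have hφj : φ (of j) = .ofAdd y := by simp [φ, ψ, L, e, hij.symm]
  refine ⟨φ, MonoidHom.surjective_of_apply_eq_ofAdd_one (s := of i ^ u * of j ^ v) ?_⟩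
  rw [map_mul, map_zpow, map_zpow, hφi, hφj, ← Int.ofAdd_mul, ← Int.ofAdd_mul, ← ofAdd_add,
    mul_comm x, mul_comm y, huv]

theorem one_relator_torsion_free_infinite_C_width_general (n : ℕ) (hn : 2 ≤ n)
    (r : FreeGroup (Fin n)) :
    ¬ FiniteCWidth (PresentedGroup ({r} : Set (FreeGroup (Fin n)))) := by
  obtain ⟨φ, hφ⟩ := PresentedGroup.exists_surjective_multiplicative_int
    (i := (⟨0, by omega⟩ : Fin n)) (j := ⟨1, by omega⟩) (by simp [Fin.ext_iff]) r
  exact fun h => not_finiteCWidth_multiplicative_int (h.of_surjective hφ)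

/-- Every torsion-free one-relator group on at least two generators has infinite
`C`-width. -/
theorem one_relator_torsion_free_infinite_C_width (n : ℕ) (hn : 2 ≤ n)
    (r : FreeGroup (Fin n))
    (htf : ∀ g : PresentedGroup ({r} : Set (FreeGroup (Fin n))), g ≠ 1 → ¬IsOfFinOrder g) :
    ¬ FiniteCWidth (PresentedGroup ({r} : Set (FreeGroup (Fin n)))) :=
  one_relator_torsion_free_infinite_C_width_general n hn r
end

section
/- Let F_r be a free group of rank r ≥ 2 and let S be a set of words such that the set S(F_r) of values of the corresponding word maps in F_r generates F_r. Then the verbal width of F_r with respect to S is finite: if a primitive element x of F_r has length n with respect to S(F_r) ∪ S(F_r)⁻¹, then every element of F_r is a product of at most n elements of S(F_r) ∪ S(F_r)⁻¹. -/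
/-- An element of a free group is primitive if it is the image of a generator under
some automorphism (equivalently, it belongs to some free basis). -/
def IsPrimitive {r : ℕ} (x : FreeGroup (Fin r)) : Prop :=
  ∃ (e : FreeGroup (Fin r) ≃* FreeGroup (Fin r)) (i : Fin r), e (FreeGroup.of i) = x

/-- If `T` is an endomorphism-invariant subset of the free group `F_r` (the set of values
of a family of word maps) which generates `F_r`, and a primitive element `x` is a product
of `n` elements of `T ∪ T⁻¹`, then every element of `F_r` is a product of at most `n`
elements of `T ∪ T⁻¹`; in particular the verbal width is finite. -/
theorem free_group_verbal_width_finite {r : ℕ} (hr : 2 ≤ r) (T : Set (FreeGroup (Fin r)))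
    (hEnd : ∀ (φ : FreeGroup (Fin r) →* FreeGroup (Fin r)), ∀ t ∈ T, φ t ∈ T)
    (hgen : Subgroup.closure T = ⊤)
    (x : FreeGroup (Fin r)) (hx : IsPrimitive x)
    (n : ℕ) (l : List (FreeGroup (Fin r)))
    (hl : ∀ y ∈ l, y ∈ T ∪ T⁻¹) (hlp : l.prod = x) (hln : l.length = n) :
    ∀ w : FreeGroup (Fin r), ∃ m : List (FreeGroup (Fin r)),
      (∀ y ∈ m, y ∈ T ∪ T⁻¹) ∧ m.prod = w ∧ m.length ≤ n := by
  intro w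
  obtain ⟨e, i, hei⟩ := hx
  -- endomorphism sending x to w
  set σ : FreeGroup (Fin r) →* FreeGroup (Fin r) :=
    FreeGroup.lift (fun j => if j = i then w else 1) with hσ
  set φ : FreeGroup (Fin r) →* FreeGroup (Fin r) :=
    σ.comp (e.symm : FreeGroup (Fin r) ≃* FreeGroup (Fin r)).toMonoidHom with hφ
  have hφx : φ x = w := by
    have : e.symm x = FreeGroup.of i := by
      rw [← hei, MulEquiv.symm_apply_apply]
    simp [hφ, this, hσ, FreeGroup.lift_apply_of]
  refine ⟨l.map φ, ?_, ?_, ?_⟩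
  · intro y hy
    obtain ⟨z, hz, rfl⟩ := List.mem_map.mp hy
    rcases hl z hz with h | h
    · exact Or.inl (hEnd φ z h)
    · refine Or.inr ?_
      have h2 : φ z⁻¹ ∈ T := hEnd φ z⁻¹ h
      rw [map_inv] at h2
      exact Set.mem_inv.mpr (by simpa using h2)
  · rw [List.prod_hom l φ, hlp, hφx]
  · simpa using hln.le
end

section
/- For any g ∈ G = G₁ *_H G₂ (with f defined via a-segment counts), f(g⁻¹) satisfies d_k(g⁻¹) = −d_k(g) for all k; in particular f(g⁻¹) = f(g). -/
open scoped Pointwise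

/-- `x` and `y` lie in different factors. -/
def InDiffFactors {G : Type*} [Group G] (G₁ G₂ : Subgroup G) (x y : G) : Prop :=
  ¬(x ∈ G₁ ∧ y ∈ G₁) ∧ ¬(x ∈ G₂ ∧ y ∈ G₂)

/-- A reduced word in an (internal) amalgamated free product of `G₁` and `G₂` over `H`. -/
def ReducedWord' {G : Type*} [Group G] (G₁ G₂ H : Subgroup G) (w : List G) : Prop :=
  (∀ x ∈ w, x ∈ (G₁ : Set G) ∪ (G₂ : Set G)) ∧
  w.Chain' (InDiffFactors G₁ G₂) ∧
  (1 < w.length → ∀ x ∈ w, x ∉ H) ∧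
  (w.length = 1 → (1 : G) ∉ w)

/-- `G` is the (internal) amalgamated free product `G₁ *_H G₂`: `H = G₁ ⊓ G₂`,
the factors generate, and nonempty reduced words have nontrivial product. -/
def IsAmalgam {G : Type*} [Group G] (G₁ G₂ H : Subgroup G) : Prop :=
  H = G₁ ⊓ G₂ ∧ Subgroup.closure ((G₁ : Set G) ∪ (G₂ : Set G)) = ⊤ ∧
  ∀ w : List G, ReducedWord' G₁ G₂ H w → w ≠ [] → w.prod ≠ 1

/-- The double coset `H a H`. -/
def DCoset {G : Type*} [Group G] (H : Subgroup G) (a : G) : Set G :=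
  (H : Set G) * {a} * (H : Set G)

/-- There is an `a`-segment of length `2k-1` starting at position `j` of the word `w`:
a subword `a x₁ ⋯ x_{2k-1} a` with no `x_i = a`. -/
def IsSegAt {G : Type*} [Group G] (a : G) (w : List G) (k j : ℕ) : Prop :=
  1 ≤ k ∧ w[j]? = some a ∧ w[j + 2 * k]? = some a ∧
    ∀ i, 0 < i → i < 2 * k → w[j + i]? ≠ some a

/-- `pk a w k` = number of `a`-segments of length `2k-1` in `w`. -/
noncomputable def pk {G : Type*} [Group G] (a : G) (w : List G) (k : ℕ) : ℕ :=
  Set.ncard {j : ℕ | IsSegAt a w k j}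

/-- `mk' a w k` = number of `a⁻¹`-segments of length `2k-1` in `w`. -/
noncomputable def mk' {G : Type*} [Group G] (a : G) (w : List G) (k : ℕ) : ℕ :=
  pk a⁻¹ w k

noncomputable def dk {G : Type*} [Group G] (a : G) (w : List G) (k : ℕ) : ℤ :=
  (pk a w k : ℤ) - (mk' a w k : ℤ)

/-- `rk` is the parity of `dk`. -/
noncomputable def rk {G : Type*} [Group G] (a : G) (w : List G) (k : ℕ) : ℕ :=
  (dk a w k).natAbs % 2

/-- The segment-counting function `f(w) = Σ_k r_k(w)` (all segments have length
at most the length of `w`, so the sum below is the full sum). -/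
noncomputable def segf {G : Type*} [Group G] (a : G) (w : List G) : ℕ :=
  ∑ k ∈ Finset.Icc 1 w.length, rk a w k

/-- Data describing the passage from a reduced word `x` to a special form: each
syllable of the form `u * a^θ * v` with `u v ∈ H` (marked `rep i = true`) is replaced
by `a^θ`, with `u`, `v` absorbed into the neighbouring syllables. -/
structure SpecialData {G : Type*} [Group G] (H : Subgroup G) (a : G) (x : List G) where
  rep : ℕ → Bool
  u : ℕ → G
  v : ℕ → G
  θ : ℕ → ℤ
  hu : ∀ i, u i ∈ H
  hv : ∀ i, v i ∈ H
  hθ : ∀ i, θ i = 1 ∨ θ i = -1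
  hrep : ∀ (i : ℕ) (hi : i < x.length), rep i = true → x.get ⟨i, hi⟩ = u i * a ^ θ i * v i
  hnotrep : ∀ i, rep i = false → u i = 1 ∧ v i = 1
  hforced : ∀ (i : ℕ) (hi : i < x.length),
    (∃ u' ∈ H, ∃ v' ∈ H, ∃ θ' : ℤ, (θ' = 1 ∨ θ' = -1) ∧ x.get ⟨i, hi⟩ = u' * a ^ θ' * v') →
    rep i = true

/-- The special form produced from the reduced word `x` by the data `d`. -/
def SpecialData.word {G : Type*} [Group G] {H : Subgroup G} {a : G} {x : List G}
    (d : SpecialData H a x) : List G :=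
  (if x.length ≠ 0 ∧ d.rep 0 = true then [d.u 0] else []) ++
  (List.ofFn fun i : Fin x.length =>
    if d.rep (i : ℕ) = true then a ^ d.θ (i : ℕ)
    else (if (i : ℕ) = 0 then 1 else d.v ((i : ℕ) - 1)) * x.get i *
      (if (i : ℕ) + 1 < x.length then d.u ((i : ℕ) + 1) else 1)) ++
  (if x.length ≠ 0 ∧ d.rep (x.length - 1) = true then [d.v (x.length - 1)] else [])

/-- `w` is a special form of `g`. -/
def IsSpecialForm {G : Type*} [Group G] (G₁ G₂ H : Subgroup G) (a g : G) (w : List G) : Prop :=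
  ∃ (x : List G) (d : SpecialData H a x),
    ReducedWord' G₁ G₂ H x ∧ x.prod = g ∧ w = d.word

/-! By uniqueness of reduced forms in `G₁ *_H G₂`, a reduced word for `g⁻¹` agrees letter
by letter, up to double cosets `H · H`, with the reversed inverted reduced word of `g`.
In a special form a syllable becomes the letter `a^{±1}` exactly when it lies in
`H a^{±1} H` (and `HaH ≠ Ha⁻¹H` keeps the two cases apart), while the letters from `H` added
at the ends are never `a^{±1}`. Hence the positions of `a` in a special form of `g⁻¹` mirror
the positions of `a⁻¹` in one of `g`, and mirroring preserves the gaps between consecutive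
occurrences: `p_k(g⁻¹) = m_k(g)` and `m_k(g⁻¹) = p_k(g)`. -/

section DoubleCosets

variable {G : Type*} [Group G] {H : Subgroup G} {a b c z : G}

lemma mem_dcoset : z ∈ DCoset H b ↔ ∃ u ∈ H, ∃ v ∈ H, z = u * b * v :=
  DoubleCoset.mem_doubleCoset

lemma mem_dcoset_self (H : Subgroup G) (b : G) : b ∈ DCoset H b :=
  DoubleCoset.mem_doubleCoset_self H H b

lemma dcoset_eq_of_mem (h : z ∈ DCoset H b) : DCoset H z = DCoset H b :=
  DoubleCoset.doubleCoset_eq_of_mem h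

lemma mem_dcoset_iff_dcoset_eq : z ∈ DCoset H b ↔ DCoset H z = DCoset H b :=
  ⟨dcoset_eq_of_mem, fun h => h ▸ mem_dcoset_self H z⟩

lemma mem_dcoset_iff_of_mem (h : z ∈ DCoset H c) : z ∈ DCoset H b ↔ c ∈ DCoset H b := by
  rw [mem_dcoset_iff_dcoset_eq, mem_dcoset_iff_dcoset_eq, dcoset_eq_of_mem h]

lemma inv_mem_dcoset_inv (h : z ∈ DCoset H b) : z⁻¹ ∈ DCoset H b⁻¹ := by
  obtain ⟨u, hu, v, hv, rfl⟩ := mem_dcoset.1 h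
  exact mem_dcoset.2 ⟨v⁻¹, inv_mem hv, u⁻¹, inv_mem hu, by group⟩

lemma inv_mem_dcoset_inv_iff : z⁻¹ ∈ DCoset H b⁻¹ ↔ z ∈ DCoset H b :=
  ⟨fun h => by simpa using inv_mem_dcoset_inv h, inv_mem_dcoset_inv⟩

lemma notMem_of_dcoset_ne (hd : DCoset H a ≠ DCoset H a⁻¹) : a ∉ H := fun ha =>
  hd (dcoset_eq_of_mem (mem_dcoset.2 ⟨a⁻¹, inv_mem ha, a⁻¹, inv_mem ha, by group⟩)).symm

lemma mem_dcoset_iff_eq (hd : DCoset H a ≠ DCoset H a⁻¹) (hc : c = a ∨ c = a⁻¹)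
    (hb : b = a ∨ b = a⁻¹) : c ∈ DCoset H b ↔ c = b := by
  refine ⟨fun h => ?_, fun h => h ▸ mem_dcoset_self H c⟩
  have := dcoset_eq_of_mem h
  rcases hc with rfl | rfl <;> rcases hb with rfl | rfl
  exacts [rfl, absurd this hd, absurd this.symm hd, rfl]

end DoubleCosets

section NormalForm

variable {G : Type*} [Group G] {G₁ G₂ H : Subgroup G} {p q x y z : G} {ps qs w : List G}

lemma inDiffFactors_comm : InDiffFactors G₁ G₂ x y ↔ InDiffFactors G₁ G₂ y x := by
  simp only [InDiffFactors, and_comm]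

lemma inDiffFactors_inv_left : InDiffFactors G₁ G₂ x⁻¹ y ↔ InDiffFactors G₁ G₂ x y := by
  simp only [InDiffFactors, inv_mem_iff]

lemma inDiffFactors_inv_right : InDiffFactors G₁ G₂ x y⁻¹ ↔ InDiffFactors G₁ G₂ x y := by
  simp only [InDiffFactors, inv_mem_iff]

lemma not_inDiffFactors_iff :
    ¬InDiffFactors G₁ G₂ x y ↔ (x ∈ G₁ ∧ y ∈ G₁) ∨ (x ∈ G₂ ∧ y ∈ G₂) := by
  unfold InDiffFactors
  tauto

lemma not_inDiffFactors_inv_mul (h : ¬InDiffFactors G₁ G₂ x y) :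
    ¬InDiffFactors G₁ G₂ x (y⁻¹ * x) := by
  rw [not_inDiffFactors_iff] at h ⊢
  rcases h with ⟨hx, hy⟩ | ⟨hx, hy⟩
  exacts [.inl ⟨hx, mul_mem (inv_mem hy) hx⟩, .inr ⟨hx, mul_mem (inv_mem hy) hx⟩]

/-- Outside `H = G₁ ⊓ G₂` a letter lies in at most one factor. -/
lemma InDiffFactors.of_not_inDiffFactors (hH : H = G₁ ⊓ G₂) (hx : x ∉ H) (hy : y ∉ H)
    (hxy : ¬InDiffFactors G₁ G₂ x y) (h : InDiffFactors G₁ G₂ x z) :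
    InDiffFactors G₁ G₂ y z := by
  subst hH
  simp only [Subgroup.mem_inf] at hx hy
  simp only [InDiffFactors] at hxy h ⊢
  tauto

lemma isChain_inDiffFactors_reverse_inv (h : w.IsChain (InDiffFactors G₁ G₂)) :
    (w.map (·⁻¹)).reverse.IsChain (InDiffFactors G₁ G₂) := by
  rw [List.isChain_reverse, List.isChain_map]
  exact h.imp fun x y hxy => by
    rwa [inDiffFactors_inv_left, inDiffFactors_inv_right, inDiffFactors_comm]

lemma ReducedWord'.reverse_inv (h : ReducedWord' G₁ G₂ H w) :
    ReducedWord' G₁ G₂ H (w.map (·⁻¹)).reverse := by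
  refine ⟨?_, isChain_inDiffFactors_reverse_inv h.2.1, ?_, ?_⟩ <;>
    simp only [List.length_reverse, List.length_map, List.mem_reverse, List.mem_map]
  · rintro _ ⟨x, hx, rfl⟩
    simpa using h.1 x hx
  · rintro hn _ ⟨x, hx, rfl⟩
    simpa using h.2.2.1 hn x hx
  · rintro hn ⟨x, hx, hx1⟩
    exact h.2.2.2 hn (by simpa [inv_eq_one.1 hx1] using hx)

structure IsStronglyReduced (G₁ G₂ H : Subgroup G) (w : List G) : Prop where
  mem_factor : ∀ x ∈ w, x ∈ (G₁ : Set G) ∪ (G₂ : Set G)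
  isChain : w.IsChain (InDiffFactors G₁ G₂)
  notMem : ∀ x ∈ w, x ∉ H

namespace IsStronglyReduced

lemma nil : IsStronglyReduced G₁ G₂ H [] :=
  ⟨by simp, List.isChain_nil, by simp⟩

lemma reducedWord' (h : IsStronglyReduced G₁ G₂ H w) : ReducedWord' G₁ G₂ H w :=
  ⟨h.mem_factor, h.isChain, fun _ => h.notMem, fun _ h1 => h.notMem 1 h1 (one_mem H)⟩

lemma prod_ne_one (ham : IsAmalgam G₁ G₂ H) (h : IsStronglyReduced G₁ G₂ H w) (hw : w ≠ []) :
    w.prod ≠ 1 :=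
  ham.2.2 w h.reducedWord' hw

lemma tail (h : IsStronglyReduced G₁ G₂ H (p :: ps)) : IsStronglyReduced G₁ G₂ H ps :=
  ⟨fun x hx => h.mem_factor x (.tail p hx), h.isChain.tail,
    fun x hx => h.notMem x (.tail p hx)⟩

lemma append {u v : List G} (hu : IsStronglyReduced G₁ G₂ H u)
    (hv : IsStronglyReduced G₁ G₂ H v)
    (huv : ∀ x ∈ u.getLast?, ∀ y ∈ v.head?, InDiffFactors G₁ G₂ x y) :
    IsStronglyReduced G₁ G₂ H (u ++ v) := by
  refine ⟨fun x hx => ?_, List.isChain_append.2 ⟨hu.isChain, hv.isChain, huv⟩, fun x hx => ?_⟩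
  · rcases List.mem_append.1 hx with hx | hx
    exacts [hu.mem_factor x hx, hv.mem_factor x hx]
  · rcases List.mem_append.1 hx with hx | hx
    exacts [hu.notMem x hx, hv.notMem x hx]

lemma reverse_inv (h : IsStronglyReduced G₁ G₂ H w) :
    IsStronglyReduced G₁ G₂ H (w.map (·⁻¹)).reverse := by
  refine ⟨?_, isChain_inDiffFactors_reverse_inv h.isChain, ?_⟩ <;>
    simp only [List.mem_reverse, List.mem_map]
  · rintro _ ⟨x, hx, rfl⟩
    simpa using h.mem_factor x hx
  · rintro _ ⟨x, hx, rfl⟩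
    simpa using h.notMem x hx

lemma cons_of_not_inDiffFactors (hH : H = G₁ ⊓ G₂) (h : IsStronglyReduced G₁ G₂ H (q :: qs))
    (hp : p ∉ H) (hqp : ¬InDiffFactors G₁ G₂ q p) : IsStronglyReduced G₁ G₂ H (p :: qs) := by
  have hq : q ∉ H := h.notMem q (.head qs)
  refine ⟨List.forall_mem_cons.2 ⟨?_, h.tail.mem_factor⟩, ?_,
    List.forall_mem_cons.2 ⟨hp, h.tail.notMem⟩⟩
  · rcases not_inDiffFactors_iff.1 hqp with ⟨-, h1⟩ | ⟨-, h2⟩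
    exacts [.inl h1, .inr h2]
  · refine List.isChain_cons.2 ⟨fun y hy => ?_, h.isChain.tail⟩
    exact .of_not_inDiffFactors hH hq hp hqp (List.isChain_cons.1 h.isChain |>.1 y hy)

lemma mul_head (hH : H = G₁ ⊓ G₂) (h : IsStronglyReduced G₁ G₂ H (q :: qs)) (hx : x ∈ H) :
    IsStronglyReduced G₁ G₂ H ((x * q) :: qs) := by
  have hq : q ∉ H := h.notMem q (.head qs)
  refine h.cons_of_not_inDiffFactors hH (by rwa [Subgroup.mul_mem_cancel_left _ hx]) ?_
  have hx' : x ∈ G₁ ⊓ G₂ := hH ▸ hx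
  rw [not_inDiffFactors_iff]
  rcases h.mem_factor q (.head qs) with hq | hq
  · exact .inl ⟨hq, mul_mem (Subgroup.mem_inf.1 hx').1 hq⟩
  · exact .inr ⟨hq, mul_mem (Subgroup.mem_inf.1 hx').2 hq⟩

/-- Cancellation at the head: otherwise `(q :: qs)⁻¹ * (p :: ps)`, after merging `q⁻¹` and `p`
when they share a factor, is a strongly reduced word with trivial product. -/
lemma inv_mul_mem_of_prod_eq (ham : IsAmalgam G₁ G₂ H)
    (hx : IsStronglyReduced G₁ G₂ H (p :: ps)) (hy : IsStronglyReduced G₁ G₂ H (q :: qs))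
    (hprod : (p :: ps).prod = (q :: qs).prod) :
    q⁻¹ * p ∈ H := by
  by_contra hc
  have hpq : p * ps.prod = q * qs.prod := by simpa using hprod
  by_cases hs : InDiffFactors G₁ G₂ q p
  · refine hy.reverse_inv.append hx ?_ |>.prod_ne_one ham (by simp) ?_
    · simpa [inDiffFactors_inv_left] using hs
    · rw [List.prod_append, ← List.prod_inv_reverse, hprod, inv_mul_cancel]
  · have hp : p ∉ H := hx.notMem p (.head ps)
    have hy' := hy.cons_of_not_inDiffFactors ham.1 (p := p⁻¹ * q)
      (fun h => hc (by simpa using inv_mem h)) (not_inDiffFactors_inv_mul hs)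
    refine hy'.reverse_inv.append hx.tail ?_ |>.prod_ne_one ham (by simp) ?_
    · intro c hc' y hy'
      simp only [List.map_cons, List.reverse_cons, List.getLast?_append, List.getLast?_singleton,
        Option.some_or, Option.mem_some_iff] at hc'
      subst hc'
      rw [mul_inv_rev, inv_inv]
      exact .of_not_inDiffFactors ham.1 hp hc
        (not_inDiffFactors_inv_mul (mt inDiffFactors_comm.1 hs))
        (List.isChain_cons.1 hx.isChain |>.1 y hy')
    · rw [List.prod_append, ← List.prod_inv_reverse, List.prod_cons,
        show ps.prod = p⁻¹ * (q * qs.prod) by rw [← hpq]; group]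
      group

end IsStronglyReduced

end NormalForm

section Uniqueness

variable {G : Type*} [Group G] {G₁ G₂ H : Subgroup G} {x y : List G}

theorem IsStronglyReduced.forall₂_mem_dcoset (ham : IsAmalgam G₁ G₂ H) :
    ∀ {x y : List G} {h : G}, IsStronglyReduced G₁ G₂ H x → IsStronglyReduced G₁ G₂ H y →
      h ∈ H → x.prod = h * y.prod → List.Forall₂ (fun p q => q ∈ DCoset H p) x y
  | [], [], _, _, _, _, _ => .nil
  | [], q :: qs, h, _, hy, hh, hprod =>
    absurd (by simpa [mul_assoc] using hprod.symm)
      ((hy.mul_head ham.1 hh).prod_ne_one ham (by simp))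
  | p :: ps, [], h, hx, _, hh, hprod => by
    refine absurd ?_ ((hx.mul_head ham.1 (inv_mem hh)).prod_ne_one ham (by simp))
    rw [List.prod_cons, mul_assoc, ← List.prod_cons, hprod]
    simp
  | p :: ps, q :: qs, h, hx, hy, hh, hprod => by
    have hk : p⁻¹ * (h * q) ∈ H := by
      simpa using inv_mem <| hx.inv_mul_mem_of_prod_eq ham (hy.mul_head ham.1 hh)
        (by simpa [mul_assoc] using hprod)
    refine .cons (mem_dcoset.2 ⟨h⁻¹, inv_mem hh, _, hk, by group⟩)
      (forall₂_mem_dcoset ham hx.tail hy.tail hk ?_)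
    rw [List.prod_cons, List.prod_cons] at hprod
    rw [mul_assoc, mul_assoc, ← hprod]
    group

lemma ReducedWord'.isStronglyReduced_or (hw : ReducedWord' G₁ G₂ H x) :
    IsStronglyReduced G₁ G₂ H x ∨ ∃ z ∈ H, z ≠ 1 ∧ x = [z] := by
  match x, hw with
  | [], _ => exact .inl .nil
  | [z], hw =>
    by_cases hz : z ∈ H
    · exact .inr ⟨z, hz, fun h1 => hw.2.2.2 rfl (by simp [h1]), rfl⟩
    · exact .inl ⟨hw.1, hw.2.1, by simpa using hz⟩
  | z :: z' :: zs, hw => exact .inl ⟨hw.1, hw.2.1, hw.2.2.1 (by simp)⟩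

theorem ReducedWord'.forall₂_mem_dcoset (ham : IsAmalgam G₁ G₂ H)
    (hx : ReducedWord' G₁ G₂ H x) (hy : ReducedWord' G₁ G₂ H y) (hprod : x.prod = y.prod) :
    List.Forall₂ (fun p q => q ∈ DCoset H p) x y := by
  rcases hx.isStronglyReduced_or with hx | ⟨p, hp, hp1, rfl⟩ <;>
    rcases hy.isStronglyReduced_or with hy | ⟨q, hq, hq1, rfl⟩
  · exact hx.forall₂_mem_dcoset ham hy (one_mem H) (by rw [hprod, one_mul])
  · have := hx.forall₂_mem_dcoset ham .nil hq (by simpa using hprod)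
    obtain rfl := List.forall₂_nil_right_iff.1 this
    exact absurd (by simpa using hprod.symm) hq1
  · have := IsStronglyReduced.nil.forall₂_mem_dcoset ham hy (inv_mem hp) (by simp [← hprod])
    obtain rfl := List.forall₂_nil_left_iff.1 this
    exact absurd (by simpa using hprod) hp1
  · obtain rfl : p = q := by simpa using hprod
    exact .cons (mem_dcoset_self H p) .nil

end Uniqueness

section Segments

def segStarts (S : Set ℕ) (k : ℕ) : Set ℕ :=
  {j | 1 ≤ k ∧ j ∈ S ∧ j + 2 * k ∈ S ∧ ∀ i, 0 < i → i < 2 * k → j + i ∉ S}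

lemma segStarts_image_add (S : Set ℕ) (s k : ℕ) :
    segStarts ((· + s) '' S) k = (· + s) '' segStarts S k := by
  ext j
  simp only [segStarts, Set.mem_image, Set.mem_ofPred_eq]
  constructor
  · rintro ⟨hk, ⟨i, hi, rfl⟩, ⟨i', hi', he⟩, hgap⟩
    obtain rfl : i' = i + 2 * k := by omega
    exact ⟨i, ⟨hk, hi, hi', fun t ht0 ht hit => hgap t ht0 ht ⟨i + t, hit, by omega⟩⟩, rfl⟩
  · rintro ⟨i, ⟨hk, hi, hi', hgap⟩, rfl⟩
    refine ⟨hk, ⟨i, hi, rfl⟩, ⟨i + 2 * k, hi', by omega⟩, ?_⟩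
    rintro t ht0 ht ⟨i', hi', he⟩
    obtain rfl : i' = i + t := by omega
    exact hgap t ht0 ht hi'

lemma ncard_segStarts_image_add (S : Set ℕ) (s k : ℕ) :
    (segStarts ((· + s) '' S) k).ncard = (segStarts S k).ncard := by
  rw [segStarts_image_add]
  exact Set.ncard_image_of_injective _ (add_left_injective s)

lemma segStarts_reflect {n : ℕ} {S : Set ℕ} (hS : ∀ i ∈ S, i < n) (k : ℕ) :
    segStarts {i | i < n ∧ n - 1 - i ∈ S} k =
      (fun j => n - 1 - (j + 2 * k)) '' segStarts S k := by
  ext j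
  simp only [segStarts, Set.mem_image, Set.mem_ofPred_eq]
  constructor
  · rintro ⟨hk, ⟨hjn, hj⟩, ⟨hjn', hj'⟩, hgap⟩
    refine ⟨n - 1 - (j + 2 * k),
      ⟨hk, hj', by rwa [show n - 1 - (j + 2 * k) + 2 * k = n - 1 - j by omega],
        fun t ht0 ht htS => hgap (2 * k - t) (by omega) (by omega) ⟨by omega, ?_⟩⟩, by omega⟩
    rwa [show n - 1 - (j + (2 * k - t)) = n - 1 - (j + 2 * k) + t by omega]
  · rintro ⟨i, ⟨hk, hi, hi', hgap⟩, rfl⟩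
    have := hS _ hi'
    refine ⟨hk, ⟨by omega, by rwa [show n - 1 - (n - 1 - (i + 2 * k)) = i + 2 * k by omega]⟩,
      ⟨by omega, by rwa [show n - 1 - (n - 1 - (i + 2 * k) + 2 * k) = i by omega]⟩, ?_⟩
    rintro t ht0 ht ⟨-, htS⟩
    rw [show n - 1 - (n - 1 - (i + 2 * k) + t) = i + (2 * k - t) by omega] at htS
    exact hgap (2 * k - t) (by omega) (by omega) htS

lemma ncard_segStarts_reflect {n : ℕ} {S : Set ℕ} (hS : ∀ i ∈ S, i < n) (k : ℕ) :
    (segStarts {i | i < n ∧ n - 1 - i ∈ S} k).ncard = (segStarts S k).ncard := by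
  rw [segStarts_reflect hS]
  refine Set.InjOn.ncard_image fun j hj j' hj' he => ?_
  have := hS _ hj.2.2.1
  have := hS _ hj'.2.2.1
  omega

variable {G : Type*} [Group G] {b b' : G} {u v w w' : List G} {k : ℕ}

lemma pk_eq_ncard_segStarts (b : G) (w : List G) (k : ℕ) :
    pk b w k = (segStarts {j | w[j]? = some b} k).ncard :=
  rfl

lemma pk_congr (h : ∀ j : ℕ, w[j]? = some b ↔ w'[j]? = some b') : pk b w k = pk b' w' k := by
  simp only [pk_eq_ncard_segStarts, h]

lemma pk_append_right (hb : b ∉ v) : pk b (w ++ v) k = pk b w k := by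
  refine pk_congr fun j => ?_
  rw [List.getElem?_append]
  split_ifs with hj
  · rfl
  · rw [show w[j]? = none from List.getElem?_eq_none (by omega)]
    exact ⟨fun h => absurd (List.mem_of_getElem? h) hb, nofun⟩

lemma pk_append_left (hb : b ∉ u) : pk b (u ++ w) k = pk b w k := by
  have hpos : {j | (u ++ w)[j]? = some b} = (· + u.length) '' {j | w[j]? = some b} := by
    ext j
    simp only [Set.mem_ofPred_eq, Set.mem_image, List.getElem?_append]
    split_ifs with hj
    · exact ⟨fun h => absurd (List.mem_of_getElem? h) hb, fun ⟨i, _, hi⟩ => by omega⟩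
    · exact ⟨fun h => ⟨j - u.length, h, by omega⟩, fun ⟨i, hi, he⟩ => by
        rwa [show j - u.length = i by omega]⟩
  rw [pk_eq_ncard_segStarts, hpos, ncard_segStarts_image_add, pk_eq_ncard_segStarts]

lemma pk_eq_zero_of_length_lt (hk : w.length < k) : pk b w k = 0 := by
  rw [pk_eq_ncard_segStarts, ← Set.ncard_empty ℕ]
  congr
  refine Set.eq_empty_of_forall_notMem fun j ⟨_, _, (hj : w[j + 2 * k]? = some b), _⟩ => ?_
  rw [List.getElem?_eq_none (by omega)] at hj
  cases hj

lemma rk_eq_zero_of_length_lt (hk : w.length < k) : rk b w k = 0 := by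
  simp [rk, dk, mk', pk_eq_zero_of_length_lt hk]

lemma segf_eq_sum_Icc {N : ℕ} (hN : w.length ≤ N) :
    segf b w = ∑ k ∈ Finset.Icc 1 N, rk b w k :=
  Finset.sum_subset (Finset.Icc_subset_Icc_right hN) fun k hk hkw =>
    rk_eq_zero_of_length_lt (by simp only [Finset.mem_Icc] at hk hkw; omega)

lemma segf_eq_of_dk_eq_neg (h : ∀ k, dk b w' k = -dk b w k) : segf b w' = segf b w := by
  rw [segf_eq_sum_Icc (le_max_left w'.length w.length),
    segf_eq_sum_Icc (le_max_right w'.length w.length)]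
  exact Finset.sum_congr rfl fun k _ => by rw [rk, rk, h, Int.natAbs_neg]

end Segments

section SpecialForms

variable {G : Type*} [Group G] {H : Subgroup G} {a b : G} {x y : List G}

def cosetPositions (H : Subgroup G) (b : G) (x : List G) : Set ℕ :=
  {j | ∃ t ∈ x[j]?, t ∈ DCoset H b}

lemma cosetPositions_eq_of_forall₂ (h : List.Forall₂ (fun p q => q ∈ DCoset H p) x y) :
    cosetPositions H b y = cosetPositions H b x := by
  induction h with
  | nil => rfl
  | @cons p q x y hpq _ ih =>
    ext (_ | j)
    · simp [cosetPositions, mem_dcoset_iff_of_mem hpq]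
    · simpa [cosetPositions] using Set.ext_iff.1 ih j

lemma cosetPositions_reverse_inv :
    cosetPositions H b (x.map (·⁻¹)).reverse =
      {j | j < x.length ∧ x.length - 1 - j ∈ cosetPositions H b⁻¹ x} := by
  ext j
  by_cases hj : j < x.length
  · have hj' : x.length - 1 - j < x.length := by omega
    simp [cosetPositions, hj, List.getElem?_eq_getElem hj',
      ← inv_mem_dcoset_inv_iff (z := _⁻¹)]
  · simp [cosetPositions, hj]

lemma lt_length_of_mem_cosetPositions {j : ℕ} (h : j ∈ cosetPositions H b x) :
    j < x.length := by
  obtain ⟨t, ht, -⟩ := h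
  exact (List.getElem?_eq_some_iff.1 ht).1

namespace SpecialData

def letter (d : SpecialData H a x) (i : Fin x.length) : G :=
  if d.rep (i : ℕ) = true then a ^ d.θ (i : ℕ)
  else (if (i : ℕ) = 0 then 1 else d.v ((i : ℕ) - 1)) * x.get i *
    (if (i : ℕ) + 1 < x.length then d.u ((i : ℕ) + 1) else 1)

lemma word_eq (d : SpecialData H a x) :
    d.word = (if x.length ≠ 0 ∧ d.rep 0 = true then [d.u 0] else []) ++ List.ofFn d.letter ++
      (if x.length ≠ 0 ∧ d.rep (x.length - 1) = true then [d.v (x.length - 1)] else []) :=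
  rfl

lemma get_mem_dcoset_letter (d : SpecialData H a x) (i : Fin x.length) :
    x.get i ∈ DCoset H (d.letter i) := by
  unfold letter
  split_ifs with hrep <;> refine mem_dcoset.2 ?_
  · exact ⟨_, d.hu i, _, d.hv i, d.hrep i i.2 hrep⟩
  · exact ⟨1, one_mem H, (d.u (i + 1))⁻¹, inv_mem (d.hu _), by group⟩
  · exact ⟨1, one_mem H, 1, one_mem H, by group⟩
  · exact ⟨(d.v (i - 1))⁻¹, inv_mem (d.hv _), (d.u (i + 1))⁻¹, inv_mem (d.hu _), by group⟩
  · exact ⟨(d.v (i - 1))⁻¹, inv_mem (d.hv _), 1, one_mem H, by group⟩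

lemma rep_of_mem_dcoset (d : SpecialData H a x) (hb : b = a ∨ b = a⁻¹) {i : Fin x.length}
    (h : x.get i ∈ DCoset H b) : d.rep i = true := by
  obtain ⟨u, hu, v, hv, hx⟩ := mem_dcoset.1 h
  refine d.hforced i i.2 ⟨u, hu, v, hv, ?_⟩
  rcases hb with rfl | rfl
  exacts [⟨1, .inl rfl, by simpa using hx⟩, ⟨-1, .inr rfl, by simpa using hx⟩]

/-- A replaced syllable becomes `a ^ θ` and any other one stays outside `H a H ∪ H a⁻¹ H`,
since `hforced` would have replaced it. -/
lemma letter_eq_iff (hd : DCoset H a ≠ DCoset H a⁻¹) (hb : b = a ∨ b = a⁻¹)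
    (d : SpecialData H a x) (i : Fin x.length) : d.letter i = b ↔ x.get i ∈ DCoset H b := by
  have hx := d.get_mem_dcoset_letter i
  by_cases hrep : d.rep i = true
  · have hl : d.letter i = a ∨ d.letter i = a⁻¹ := by
      rw [show d.letter i = a ^ d.θ i from if_pos hrep]
      rcases d.hθ i with h | h <;> simp [h]
    rw [mem_dcoset_iff_of_mem hx, mem_dcoset_iff_eq hd hl hb]
  · have hnot : x.get i ∉ DCoset H b := fun h => hrep (d.rep_of_mem_dcoset hb h)
    exact iff_of_false (fun h => hnot (h ▸ hx)) hnot

lemma pk_word_eq (hd : DCoset H a ≠ DCoset H a⁻¹) (hb : b = a ∨ b = a⁻¹)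
    (d : SpecialData H a x) (k : ℕ) :
    pk b d.word k = (segStarts (cosetPositions H b x) k).ncard := by
  have hbH : b ∉ H := by
    rcases hb with rfl | rfl
    exacts [notMem_of_dcoset_ne hd, by simpa using notMem_of_dcoset_ne hd]
  have hpos : {j | (List.ofFn d.letter)[j]? = some b} = cosetPositions H b x := by
    ext j
    by_cases hj : j < x.length
    · simpa [cosetPositions, List.getElem?_ofFn, hj] using d.letter_eq_iff hd hb ⟨j, hj⟩
    · simp [cosetPositions, List.getElem?_ofFn, hj]
  rw [word_eq, pk_append_right, pk_append_left, pk_eq_ncard_segStarts, hpos]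
  · split_ifs <;> simp only [List.mem_singleton, List.not_mem_nil, not_false_eq_true]
    exact fun h => hbH (h ▸ d.hu 0)
  · split_ifs <;> simp only [List.mem_singleton, List.not_mem_nil, not_false_eq_true]
    exact fun h => hbH (h ▸ d.hv _)

end SpecialData

end SpecialForms

theorem segf_inv_general {G : Type*} [Group G] (G₁ G₂ H : Subgroup G) (a : G)
    (ham : IsAmalgam G₁ G₂ H)
    (hd : DCoset H a ≠ DCoset H a⁻¹)
    (g : G) (w w' : List G)
    (hw : IsSpecialForm G₁ G₂ H a g w) (hw' : IsSpecialForm G₁ G₂ H a g⁻¹ w') :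
    (∀ k : ℕ, dk a w' k = - dk a w k) ∧ segf a w' = segf a w := by
  obtain ⟨x, dx, hx, rfl, rfl⟩ := hw
  obtain ⟨y, dy, hy, hy_prod, rfl⟩ := hw'
  have hxy := hx.reverse_inv.forall₂_mem_dcoset ham hy
    (by rw [← List.prod_inv_reverse, hy_prod])
  have hpk (b : G) (hb : b = a ∨ b = a⁻¹) (k : ℕ) : pk b dy.word k = pk b⁻¹ dx.word k := by
    rw [dy.pk_word_eq hd hb, dx.pk_word_eq hd (by rcases hb with rfl | rfl <;> simp),
      cosetPositions_eq_of_forall₂ hxy, cosetPositions_reverse_inv,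
      ncard_segStarts_reflect fun _ => lt_length_of_mem_cosetPositions]
  have hdk (k : ℕ) : dk a dy.word k = -dk a dx.word k := by
    rw [dk, dk, mk', mk', hpk a (.inl rfl), hpk a⁻¹ (.inr rfl), inv_inv]
    ring
  exact ⟨hdk, segf_eq_of_dk_eq_neg hdk⟩

/-- Inverting interchanges `a`-segments and `a⁻¹`-segments: `d_k (g⁻¹) = - d_k (g)` for
all `k`, and in particular `f (g⁻¹) = f (g)`. -/
theorem segf_inv {G : Type*} [Group G] (G₁ G₂ H : Subgroup G) (a : G)
    (ham : IsAmalgam G₁ G₂ H) (ha : a ∈ (G₁ : Set G) ∪ (G₂ : Set G))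
    (hd : DCoset H a ≠ DCoset H a⁻¹)
    (g : G) (w w' : List G)
    (hw : IsSpecialForm G₁ G₂ H a g w) (hw' : IsSpecialForm G₁ G₂ H a g⁻¹ w') :
    (∀ k : ℕ, dk a w' k = - dk a w k) ∧ segf a w' = segf a w :=
  segf_inv_general G₁ G₂ H a ham hd g w w' hw hw'
end

section
/- Let G = G₁ *_H G₂ with a ∈ G₂ \ H, HaH ≠ Ha⁻¹H, and b ∈ G₁ \ H. For the element g₁ = baba⁻¹ba, one has p₂(g₁) = 1, p_k(g₁) = 0 for k ≠ 2, m_k(g₁) = 0 for all k, hence f(g₁) = 1. -/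
open scoped Pointwise

/-- For `g₁ = b * a * b * a⁻¹ * b * a` one has `p₂ = 1`, `p_k = 0` for `k ≠ 2`,
`m_k = 0` for all `k`, hence `f g₁ = 1`. -/
theorem segf_g1 {G : Type*} [Group G] (G₁ G₂ H : Subgroup G) (a b : G)
    (ham : IsAmalgam G₁ G₂ H)
    (haG : a ∈ G₂) (haH : a ∉ H) (hd : DCoset H a ≠ DCoset H a⁻¹)
    (hbG : b ∈ G₁) (hbH : b ∉ H) :
    pk a [b, a, b, a⁻¹, b, a] 2 = 1 ∧
    (∀ k : ℕ, k ≠ 2 → pk a [b, a, b, a⁻¹, b, a] k = 0) ∧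
    (∀ k : ℕ, mk' a [b, a, b, a⁻¹, b, a] k = 0) ∧
    segf a [b, a, b, a⁻¹, b, a] = 1 := by
  have haa : a⁻¹ ≠ a := fun h => hd (by rw [h])
  have haH1 : a ∉ G₁ := fun h => haH (by rw [ham.1]; exact ⟨h, haG⟩)
  have hba : b ≠ a := fun h => haH1 (h ▸ hbG)
  have hba' : b ≠ a⁻¹ := fun h => haH1 (by have := G₁.inv_mem (h ▸ hbG : a⁻¹ ∈ G₁); simpa using this)
  set w : List G := [b, a, b, a⁻¹, b, a] with hw
  have hseg : ∀ k j, IsSegAt a w k j ↔ (k = 2 ∧ j = 1) := by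
    intro k j
    constructor
    · rintro ⟨hk, h1, h2, h3⟩
      have hlt : j + 2 * k < 6 := by
        have := (List.getElem?_eq_some_iff.mp h2).1
        simpa [hw] using this
      have hj : j ≤ 3 := by omega
      have hk2 : k ≤ 2 := by omega
      interval_cases j <;> interval_cases k <;>
        (simp only [hw] at h1 h2 h3; simp_all [hba, haa, hba'])
    · rintro ⟨rfl, rfl⟩
      refine ⟨by norm_num, rfl, rfl, ?_⟩
      intro i hi hi'
      interval_cases i <;> simp [hw, hba, haa]
  have hseg' : ∀ k j, ¬ IsSegAt a⁻¹ w k j := by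
    rintro k j ⟨hk, h1, h2, h3⟩
    have hlt : j + 2 * k < 6 := by
      have := (List.getElem?_eq_some_iff.mp h2).1
      simpa [hw] using this
    have hj : j ≤ 3 := by omega
    have hk2 : k ≤ 2 := by omega
    have haa' : a ≠ a⁻¹ := fun h => haa h.symm
    have hba'' : b ≠ a⁻¹ := hba'
    interval_cases j <;> interval_cases k <;>
      (simp only [hw] at h1 h2 h3; simp_all [hba'', haa'])
  have hp2 : pk a w 2 = 1 := by
    have : {j : ℕ | IsSegAt a w 2 j} = {1} := by
      ext j; simp [hseg]
    rw [pk, this, Set.ncard_singleton]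
  have hpk : ∀ k : ℕ, k ≠ 2 → pk a w k = 0 := by
    intro k hk
    have : {j : ℕ | IsSegAt a w k j} = ∅ := by
      ext j; simp [hseg, hk]
    rw [pk, this, Set.ncard_empty]
  have hmk : ∀ k : ℕ, mk' a w k = 0 := by
    intro k
    have : {j : ℕ | IsSegAt a⁻¹ w k j} = ∅ := by
      ext j; simp [hseg']
    rw [mk', pk, this, Set.ncard_empty]
  refine ⟨hp2, hpk, hmk, ?_⟩
  have hlen : w.length = 6 := rfl
  have hr : ∀ k, rk a w k = if k = 2 then 1 else 0 := by
    intro k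
    by_cases h : k = 2
    · subst h; simp [rk, dk, hp2, hmk]
    · simp [rk, dk, hpk k h, hmk, h]
  rw [segf, hlen]
  simp [hr]
end

section
/- Let G = G₁ *_H G₂ with a ∈ G₂ \ H satisfying HaH ≠ Ha⁻¹H and b ∈ G₁ \ H. Define g_n = baba⁻¹ba(ba⁻¹)²ba⋯(ba⁻¹)^{n−1}ba(ba⁻¹)^n ba. Then f(g_n) ≥ n − 1, so f is unbounded on G. -/
open scoped Pointwise

/-- The word `g_n = b a b a⁻¹ b a (b a⁻¹)² b a ⋯ (b a⁻¹)ⁿ b a` (as a list of syllables). -/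
def gword {G : Type*} [Group G] (a b : G) (n : ℕ) : List G :=
  [b, a] ++ ((List.range n).map fun j => (List.replicate (j + 1) [b, a⁻¹]).flatten ++ [b, a]).flatten

/-!
In `g_n` the syllables `a` sit at the positions `m² + 3m + 1` (`m ≤ n`), consecutive ones
`2(m + 2)` apart, `b` fills the even positions and `a⁻¹` the remaining odd ones. Hence for every
`3 ≤ k ≤ n + 1` there is exactly one `a`-segment of length `2k - 1`, while an `a⁻¹`-segment of
length at least `5` would need two `a`'s only two steps apart. So `r_k(g_n) = 1` for these `n - 1`
values of `k`. Marking the odd syllables of the reduced word `g_n` as replaced gives a special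
form of `g_n` with the same segments, so `f` is unbounded on special forms.
-/

lemma List.flatten_replicate_pair {α : Type*} (x y : α) (k : ℕ) :
    (List.replicate k [x, y]).flatten =
      (List.range (2 * k)).map fun r => if Even r then x else y := by
  induction k with
  | zero => rfl
  | succ k ih =>
    rw [List.replicate_succ', List.flatten_append, ih, show 2 * (k + 1) = 2 * k + 1 + 1 by ring,
      List.range_succ, List.range_succ]
    simp [parity_simps]

lemma List.getElem?_append_eq_some_iff_of_notMem {α : Type*} {w t : List α} {c : α}
    (hc : c ∉ t) (i : ℕ) : (w ++ t)[i]? = some c ↔ w[i]? = some c := by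
  rcases lt_or_ge i w.length with h | h
  · rw [List.getElem?_append_left h]
  · rw [List.getElem?_append_right h, List.getElem?_eq_none h]
    exact iff_of_false (fun h' => hc (List.mem_of_getElem? h')) (by simp)

lemma zpow_mem_iff_of_eq_one_or_eq_neg_one {G : Type*} [Group G] {K : Subgroup G} {a : G} {θ : ℤ}
    (hθ : θ = 1 ∨ θ = -1) : a ^ θ ∈ K ↔ a ∈ K := by
  rcases hθ with rfl | rfl <;> simp

lemma isSegAt_iff_of_getElem?_eq_some_iff {G : Type*} [Group G] {c : G} {w : List G}
    {p : ℕ → ℕ} (hp : StrictMono p) {n : ℕ} (hw : ∀ i, w[i]? = some c ↔ ∃ m ≤ n, p m = i)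
    (k j : ℕ) : IsSegAt c w k j ↔ ∃ m < n, p m = j ∧ p (m + 1) = j + 2 * k := by
  constructor
  · rintro ⟨hk, hj, hjk, hbetween⟩
    obtain ⟨m, -, rfl⟩ := (hw j).1 hj
    obtain ⟨m', hm'n, hm'⟩ := (hw _).1 hjk
    have hmm' : m < m' := hp.lt_iff_lt.mp (by omega)
    refine ⟨m, by omega, rfl, ?_⟩
    by_contra hne
    have hnext : m + 1 < m' := Nat.lt_of_le_of_ne hmm' (by rintro rfl; exact hne hm')
    have h₁ := hp (Nat.lt_add_one m)
    have h₂ := hp hnext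
    exact hbetween (p (m + 1) - p m) (by omega) (by omega)
      ((hw _).2 ⟨m + 1, by omega, by omega⟩)
  · rintro ⟨m, hmn, rfl, hm⟩
    have h₁ := hp (Nat.lt_add_one m)
    refine ⟨by omega, (hw _).2 ⟨m, hmn.le, rfl⟩, (hw _).2 ⟨m + 1, hmn, hm⟩, fun i hi0 hik hi => ?_⟩
    obtain ⟨m', -, hm'⟩ := (hw _).1 hi
    have := hp.lt_iff_lt.mp (show p m < p m' by omega)
    have := hp.lt_iff_lt.mp (show p m' < p (m + 1) by omega)
    omega

lemma isSegAt_append_iff {G : Type*} [Group G] {c : G} {w t : List G} (hc : c ∉ t) (k j : ℕ) :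
    IsSegAt c (w ++ t) k j ↔ IsSegAt c w k j := by
  simp only [IsSegAt, ne_eq, List.getElem?_append_eq_some_iff_of_notMem hc]

lemma segf_le_segf_append {G : Type*} [Group G] {a : G} {w t : List G} (ha : a ∉ t)
    (ha' : a⁻¹ ∉ t) : segf a w ≤ segf a (w ++ t) := by
  have hrk (k : ℕ) : rk a (w ++ t) k = rk a w k := by
    simp only [rk, dk, mk', pk, isSegAt_append_iff ha, isSegAt_append_iff ha']
  simp only [segf, hrk]
  exact Finset.sum_le_sum_of_subset (Finset.Icc_subset_Icc le_rfl (by simp))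

/-- `aPos m` is the position of the `m`-th syllable `a` of `gword a b n`: between `aPos m` and
`aPos (m + 1)` lie the `2m + 3` syllables of `(b a⁻¹)^(m+1) b`. -/
def aPos (m : ℕ) : ℕ := m * m + 3 * m + 1

lemma aPos_succ (m : ℕ) : aPos (m + 1) = aPos m + 2 * (m + 2) := by
  unfold aPos; ring

lemma aPos_strictMono : StrictMono aPos :=
  strictMono_nat_of_lt_succ fun m => by rw [aPos_succ]; omega

lemma aPos_add_le_of_lt {m m' : ℕ} (h : m < m') : aPos m + 2 * (m + 2) ≤ aPos m' :=
  aPos_succ m ▸ aPos_strictMono.monotone h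

lemma odd_aPos (m : ℕ) : Odd (aPos m) := by
  induction m with
  | zero => exact odd_one
  | succ m ih => rw [aPos_succ]; exact ih.add_even (even_two_mul _)

lemma notMem_range_aPos {m i : ℕ} (h₁ : aPos m < i) (h₂ : i < aPos (m + 1)) :
    i ∉ Set.range aPos := by
  rintro ⟨m', rfl⟩
  have := aPos_strictMono.lt_iff_lt.mp h₁
  have := aPos_strictMono.lt_iff_lt.mp h₂
  omega

open Classical in
noncomputable def aSign (i : ℕ) : ℤ := if i ∈ Set.range aPos then 1 else -1

lemma aSign_eq_one_or_eq_neg_one (i : ℕ) : aSign i = 1 ∨ aSign i = -1 := by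
  unfold aSign
  split_ifs <;> simp

section

variable {G : Type*} [Group G] {a b : G}

noncomputable def gletter (a b : G) (i : ℕ) : G :=
  if Even i then b else a ^ aSign i

lemma gletter_of_even (a b : G) {i : ℕ} (h : Even i) : gletter a b i = b := by
  simp [gletter, h]

lemma gletter_of_not_even (a b : G) {i : ℕ} (hi : ¬Even i) : gletter a b i = a ^ aSign i :=
  if_neg hi

lemma gletter_aPos (a b : G) (m : ℕ) : gletter a b (aPos m) = a := by
  simp [gletter, aSign, Nat.not_even_iff_odd.mpr (odd_aPos m)]

lemma gletter_of_aPos_lt_of_lt_aPos_succ (a b : G) {m i : ℕ} (h₁ : aPos m < i)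
    (h₂ : i < aPos (m + 1)) : gletter a b i = if Even i then b else a⁻¹ := by
  simp [gletter, aSign, notMem_range_aPos h₁ h₂]

lemma gletter_eq_a_iff (hab : a ≠ b) (haa : a ≠ a⁻¹) {i : ℕ} :
    gletter a b i = a ↔ i ∈ Set.range aPos := by
  unfold gletter aSign
  split_ifs with heven hrange
  · refine iff_of_false hab.symm ?_
    rintro ⟨m, rfl⟩
    exact Nat.not_even_iff_odd.mpr (odd_aPos m) heven
  · simpa using hrange
  · simpa [haa.symm] using hrange

lemma gword_succ (a b : G) (n : ℕ) :
    gword a b (n + 1) = gword a b n ++ ((List.replicate (n + 1) [b, a⁻¹]).flatten ++ [b, a]) := by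
  simp [gword, List.range_succ]

lemma flatten_replicate_append_eq_map_gletter (a b : G) (n : ℕ) :
    (List.replicate (n + 1) [b, a⁻¹]).flatten ++ [b, a] =
      (List.range (2 * (n + 1) + 1 + 1)).map fun r => gletter a b (aPos n + 1 + r) := by
  have hpar : ∀ r, Even (aPos n + 1 + r) ↔ Even r := fun r => by
    simp [Nat.even_add, Nat.even_add_one, Nat.not_even_iff_odd.mpr (odd_aPos n)]
  rw [List.range_succ, List.range_succ, List.map_append, List.map_append, List.append_assoc,
    List.flatten_replicate_pair]
  congr 1
  · refine List.map_congr_left fun r hr => ?_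
    rw [List.mem_range] at hr
    rw [gletter_of_aPos_lt_of_lt_aPos_succ a b (m := n) (by omega) (by rw [aPos_succ]; omega),
      if_congr (hpar r) rfl rfl]
  · have hlast : aPos n + 1 + (2 * (n + 1) + 1) = aPos (n + 1) := by rw [aPos_succ]; ring
    simp [hlast, gletter_aPos, gletter_of_even, hpar]

lemma gword_eq_map_range (a b : G) (n : ℕ) :
    gword a b n = (List.range (aPos n + 1)).map (gletter a b) := by
  induction n with
  | zero =>
    show [b, a] = (List.range 2).map (gletter a b)
    simp [List.range_succ, gletter_of_even]
    exact (gletter_aPos a b 0).symm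
  | succ n ih =>
    have hL : aPos (n + 1) + 1 = aPos n + 1 + (2 * (n + 1) + 1 + 1) := by rw [aPos_succ]; ring
    rw [gword_succ, ih, flatten_replicate_append_eq_map_gletter, hL,
      List.range_add (n := aPos n + 1), List.map_append, List.map_map]
    rfl

lemma gword_getElem?_eq_some_iff {n i : ℕ} {x : G} :
    (gword a b n)[i]? = some x ↔ i ≤ aPos n ∧ gletter a b i = x := by
  simp [gword_eq_map_range, List.getElem?_eq_some_iff]

lemma gword_getElem (a b : G) {n i : ℕ} (hi : i < (gword a b n).length) :
    (gword a b n)[i] = gletter a b i :=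
  (gword_getElem?_eq_some_iff.mp (List.getElem?_eq_getElem hi)).2.symm

lemma gword_getElem?_eq_some_a_iff (hab : a ≠ b) (haa : a ≠ a⁻¹) (n i : ℕ) :
    (gword a b n)[i]? = some a ↔ ∃ m ≤ n, aPos m = i := by
  rw [gword_getElem?_eq_some_iff, gletter_eq_a_iff hab haa]
  constructor
  · rintro ⟨hi, m, rfl⟩
    exact ⟨m, aPos_strictMono.le_iff_le.mp hi, rfl⟩
  · rintro ⟨m, hm, rfl⟩
    exact ⟨aPos_strictMono.monotone hm, m, rfl⟩

lemma pk_gword (hab : a ≠ b) (haa : a ≠ a⁻¹) {n k : ℕ} (hk : 2 ≤ k) (hkn : k ≤ n + 1) :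
    pk a (gword a b n) k = 1 := by
  have hsegs : {j | IsSegAt a (gword a b n) k j} = {aPos (k - 2)} := by
    ext j
    simp only [Set.mem_ofPred_eq, Set.mem_singleton_iff,
      isSegAt_iff_of_getElem?_eq_some_iff aPos_strictMono (gword_getElem?_eq_some_a_iff hab haa n),
      aPos_succ]
    constructor
    · rintro ⟨m, -, rfl, hm⟩
      congr 1
      omega
    · rintro rfl
      exact ⟨k - 2, by omega, rfl, by omega⟩
  rw [pk, hsegs, Set.ncard_singleton]

lemma pk_inv_gword (hab' : a⁻¹ ≠ b) {n k : ℕ} (hk : 3 ≤ k) : pk a⁻¹ (gword a b n) k = 0 := by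
  have hsegs : {j | IsSegAt a⁻¹ (gword a b n) k j} = ∅ := by
    refine Set.eq_empty_of_forall_notMem fun j hseg => ?_
    obtain ⟨-, hj, hjk, hbetween⟩ := hseg
    rw [gword_getElem?_eq_some_iff] at hj hjk
    have hodd : ¬Even j := fun h => hab' (by rw [← hj.2, gletter_of_even a b h])
    have hrange (i : ℕ) (hi0 : 0 < i) (hik : i < 2 * k) (hi : Even i) :
        j + i ∈ Set.range aPos := by
      by_contra hr
      refine hbetween i hi0 hik (gword_getElem?_eq_some_iff.mpr ⟨by omega, ?_⟩)
      simp [gletter, aSign, hr, Nat.even_add, hodd, hi]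
    -- two `a`'s are at least four apart, so `j + 2` and `j + 4` cannot both carry `a`
    obtain ⟨m₁, hm₁⟩ := hrange 2 (by omega) (by omega) even_two
    obtain ⟨m₂, hm₂⟩ := hrange 4 (by omega) (by omega) (by decide)
    have := aPos_add_le_of_lt (aPos_strictMono.lt_iff_lt.mp (show aPos m₁ < aPos m₂ by omega))
    omega
  rw [pk, hsegs, Set.ncard_empty]

lemma rk_gword (hab : a ≠ b) (hab' : a⁻¹ ≠ b) (haa : a ≠ a⁻¹) {n k : ℕ} (hk : 3 ≤ k)
    (hkn : k ≤ n + 1) : rk a (gword a b n) k = 1 := by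
  rw [rk, dk, mk', pk_gword hab haa (by omega) hkn, pk_inv_gword hab' hk]
  rfl

lemma sub_one_le_segf_gword (hab : a ≠ b) (hab' : a⁻¹ ≠ b) (haa : a ≠ a⁻¹) (n : ℕ) :
    n - 1 ≤ segf a (gword a b n) :=
  calc n - 1 = ∑ k ∈ Finset.Icc 3 (n + 1), rk a (gword a b n) k := by
        rw [Finset.sum_congr rfl fun k hk => rk_gword hab hab' haa (Finset.mem_Icc.mp hk).1
          (Finset.mem_Icc.mp hk).2]
        simp
    _ ≤ segf a (gword a b n) := by
        refine Finset.sum_le_sum_of_subset (Finset.Icc_subset_Icc (by norm_num) ?_)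
        simpa [gword_eq_map_range] using aPos_strictMono.id_le n

end

section

variable {G : Type*} [Group G] {G₁ G₂ H : Subgroup G} {a b : G}

lemma reducedWord_gword (hH : H ≤ G₁ ⊓ G₂) (ha₂ : a ∈ G₂) (ha₁ : a ∉ G₁) (hb₁ : b ∈ G₁)
    (hb₂ : b ∉ G₂) (n : ℕ) : ReducedWord' G₁ G₂ H (gword a b n) := by
  have hodd {i : ℕ} (hi : ¬Even i) : gletter a b i ∈ G₂ ∧ gletter a b i ∉ G₁ := by
    rw [gletter_of_not_even a b hi,
      zpow_mem_iff_of_eq_one_or_eq_neg_one (aSign_eq_one_or_eq_neg_one i),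
      zpow_mem_iff_of_eq_one_or_eq_neg_one (aSign_eq_one_or_eq_neg_one i)]
    exact ⟨ha₂, ha₁⟩
  have hletter : ∀ x ∈ gword a b n, (x ∈ G₁ ∨ x ∈ G₂) ∧ x ∉ H := by
    simp only [gword_eq_map_range, List.mem_map]
    rintro _ ⟨i, -, rfl⟩
    by_cases hi : Even i
    · rw [gletter_of_even a b hi]
      exact ⟨.inl hb₁, fun h => hb₂ (hH h).2⟩
    · exact ⟨.inr (hodd hi).1, fun h => (hodd hi).2 (hH h).1⟩
  refine ⟨fun x hx => (hletter x hx).1, ?_, fun _ x hx => (hletter x hx).2, ?_⟩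
  · rw [gword_eq_map_range, List.Chain', List.isChain_map, List.isChain_range]
    intro i _
    by_cases hi : Even i
    · exact ⟨fun h => (hodd (by simpa [Nat.even_add_one])).2 h.2,
        fun h => hb₂ (gletter_of_even a b hi ▸ h.1)⟩
    · exact ⟨fun h => (hodd hi).2 h.1,
        fun h => hb₂ (gletter_of_even a b (Nat.even_add_one.mpr hi) ▸ h.2)⟩
  · simp [gword_eq_map_range, aPos]

lemma ne_mul_zpow_mul (hH : H ≤ G₁) (hb : b ∈ G₁) (ha : a ∉ G₁) {u v : G} (hu : u ∈ H)
    (hv : v ∈ H) {θ : ℤ} (hθ : θ = 1 ∨ θ = -1) : b ≠ u * a ^ θ * v := by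
  intro h
  refine ha ((zpow_mem_iff_of_eq_one_or_eq_neg_one hθ).mp ?_)
  rw [show a ^ θ = u⁻¹ * b * v⁻¹ by rw [h]; group]
  exact mul_mem (mul_mem (inv_mem (hH hu)) hb) (inv_mem (hH hv))

/-- The last syllable is odd, hence marked as replaced, and `SpecialData.word` appends its right
factor `v = 1`: the special form is `gword a b n ++ [1]`. -/
noncomputable def gwordSpecialData (hH : H ≤ G₁) (hb : b ∈ G₁) (ha : a ∉ G₁) (n : ℕ) :
    SpecialData H a (gword a b n) where
  rep i := !decide (Even i)
  u _ := 1
  v _ := 1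
  θ := aSign
  hu _ := H.one_mem
  hv _ := H.one_mem
  hθ := aSign_eq_one_or_eq_neg_one
  hrep i _ h := by
    simpa [gword_getElem] using gletter_of_not_even a b (by simpa using h)
  hnotrep _ _ := ⟨rfl, rfl⟩
  hforced i _ := by
    rintro ⟨u, hu, v, hv, θ, hθ, h⟩
    by_contra heven
    rw [List.get_eq_getElem, gword_getElem, gletter_of_even a b (by simpa using heven)] at h
    exact ne_mul_zpow_mul hH hb ha hu hv hθ h

lemma gwordSpecialData_word (hH : H ≤ G₁) (hb : b ∈ G₁) (ha : a ∉ G₁) (n : ℕ) :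
    (gwordSpecialData hH hb ha n).word = gword a b n ++ [1] := by
  have hlen : (gword a b n).length = aPos n + 1 := by simp [gword_eq_map_range]
  have hfirst : ¬((gword a b n).length ≠ 0 ∧ (!decide (Even 0)) = true) := by simp
  have hlast : (gword a b n).length ≠ 0 ∧ (!decide (Even ((gword a b n).length - 1))) = true := by
    simp [hlen, Nat.not_even_iff_odd, odd_aPos]
  simp only [SpecialData.word, gwordSpecialData, ite_self, one_mul, mul_one, hfirst, hlast,
    if_false, List.nil_append]
  congr 1
  refine List.ext_getElem (by simp) fun i _ hi => ?_
  by_cases heven : Even i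
  · simp [heven]
  · simp [heven, gword_getElem, gletter_of_not_even]

lemma isSpecialForm_gword (hH : H ≤ G₁ ⊓ G₂) (ha₂ : a ∈ G₂) (ha₁ : a ∉ G₁) (hb₁ : b ∈ G₁)
    (hb₂ : b ∉ G₂) (n : ℕ) : IsSpecialForm G₁ G₂ H a (gword a b n).prod (gword a b n ++ [1]) :=
  ⟨gword a b n, gwordSpecialData (hH.trans inf_le_left) hb₁ ha₁ n,
    reducedWord_gword hH ha₂ ha₁ hb₁ hb₂ n, rfl, (gwordSpecialData_word _ _ _ n).symm⟩

end

/-- For `g_n = b a b a⁻¹ b a (b a⁻¹)² ⋯ (b a⁻¹)ⁿ b a` one has `f (g_n) ≥ n - 1`; hence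
`f` is unbounded on `G`. -/
theorem segf_gn_unbounded {G : Type*} [Group G] (G₁ G₂ H : Subgroup G) (a b : G)
    (ham : IsAmalgam G₁ G₂ H)
    (haG : a ∈ G₂) (haH : a ∉ H) (hd : DCoset H a ≠ DCoset H a⁻¹)
    (hbG : b ∈ G₁) (hbH : b ∉ H) :
    (∀ n : ℕ, n - 1 ≤ segf a (gword a b n)) ∧
    ∀ N : ℕ, ∃ (g : G) (w : List G), IsSpecialForm G₁ G₂ H a g w ∧ N ≤ segf a w := by
  obtain ⟨hH, -, -⟩ := ham
  have ha₁ : a ∉ G₁ := fun h => haH (hH ▸ ⟨h, haG⟩)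
  have hb₂ : b ∉ G₂ := fun h => hbH (hH ▸ ⟨hbG, h⟩)
  have hab : a ≠ b := fun h => ha₁ (h ▸ hbG)
  have hab' : a⁻¹ ≠ b := fun h => ha₁ (inv_mem_iff.mp (h ▸ hbG))
  have haa : a ≠ a⁻¹ := fun h => hd (by rw [← h])
  have hsegf (n : ℕ) : n - 1 ≤ segf a (gword a b n) := sub_one_le_segf_gword hab hab' haa n
  refine ⟨hsegf, fun N => ⟨_, _, isSpecialForm_gword hH.le haG ha₁ hbG hb₂ (N + 1), ?_⟩⟩
  have ha1 : a ≠ 1 := fun h => haH (h ▸ H.one_mem)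
  calc N ≤ segf a (gword a b (N + 1)) := hsegf (N + 1)
    _ ≤ segf a (gword a b (N + 1) ++ [1]) :=
      segf_le_segf_append (by simpa using ha1) (by simpa using ha1)
end
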